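/- arXiv:1408.0674 — 5 statements merged into one kernel-verified Lean document; each statement's English description precedes it below -/
import Mathlib

section
/- For all real r > 0 and ϑ with |ϑ| ≤ π, the quantity 1/|(1 - e^{-(3π/4 + ϑ/2)i} r)(1 - e^{(3π/4 - ϑ/2)i} r)| is at most 1. -/
open Real

lemma sq_abs_factor (θ r : ℝ) :
    (‖1 - Complex.exp ((θ : ℂ) * Complex.I) * (r : ℂ)‖)^2
      = 1 - 2 * r * Real.cos θ + r^2 := by
  rw [Complex.sq_norm, Complex.exp_mul_I]
  simp [Complex.normSq_apply, Complex.add_re, Complex.add_im, Complex.cos_ofReal_re,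
    Complex.sin_ofReal_re]
  nlinarith [Real.sin_sq_add_cos_sq θ]

theorem stmt1 (r ϑ : ℝ) (hr : 0 < r) (hϑ : |ϑ| ≤ π) :
    (‖(1 - Complex.exp (-(3 * π / 4 + ϑ / 2) * Complex.I) * r) *
        (1 - Complex.exp ((3 * π / 4 - ϑ / 2) * Complex.I) * r)‖)⁻¹ ≤ 1 := by
  have key : 1 ≤ ‖(1 - Complex.exp (-(3 * π / 4 + ϑ / 2) * Complex.I) * r) *
        (1 - Complex.exp ((3 * π / 4 - ϑ / 2) * Complex.I) * r)‖ := by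
    rw [norm_mul]
    have h1 := sq_abs_factor (-(3 * π / 4 + ϑ / 2)) r
    have h2 := sq_abs_factor (3 * π / 4 - ϑ / 2) r
    push_cast at h1 h2
    have a1 := norm_nonneg (1 - Complex.exp ((-(3 * π / 4 + ϑ / 2) : ℝ) * Complex.I) * (r:ℂ))
    have a2 := norm_nonneg (1 - Complex.exp (((3 * π / 4 - ϑ / 2) : ℝ) * Complex.I) * (r:ℂ))
    push_cast at a1 a2
    have h34 : (3 * π / 4 : ℝ) = π - π / 4 := by ring
    have e1 : Real.cos (-(3 * π / 4 + ϑ / 2)) =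
        -(Real.sqrt 2 / 2) * Real.cos (ϑ/2) - (Real.sqrt 2 / 2) * Real.sin (ϑ/2) := by
      rw [Real.cos_neg, Real.cos_add, h34, Real.cos_pi_sub, Real.sin_pi_sub,
        Real.cos_pi_div_four, Real.sin_pi_div_four]
    have e2 : Real.cos (3 * π / 4 - ϑ / 2) =
        -(Real.sqrt 2 / 2) * Real.cos (ϑ/2) + (Real.sqrt 2 / 2) * Real.sin (ϑ/2) := by
      rw [Real.cos_sub, h34, Real.cos_pi_sub, Real.sin_pi_sub,
        Real.cos_pi_div_four, Real.sin_pi_div_four]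
    have hc : 0 ≤ Real.cos (ϑ/2) := by
      apply Real.cos_nonneg_of_mem_Icc
      rw [abs_le] at hϑ
      constructor <;> [linarith [hϑ.1]; linarith [hϑ.2]]
    have hs2 : Real.sqrt 2 ^ 2 = 2 := Real.sq_sqrt (by norm_num)
    have hs2n : 0 ≤ Real.sqrt 2 := Real.sqrt_nonneg 2
    have hpy := Real.sin_sq_add_cos_sq (ϑ/2)
    rw [e1] at h1
    rw [e2] at h2
    have hAB2 : 1 ≤ (‖1 - Complex.exp ((-(3 * π / 4 + ϑ / 2) : ℂ) * Complex.I) * (r:ℂ)‖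
        * ‖1 - Complex.exp (((3 * π / 4 - ϑ / 2) : ℂ) * Complex.I) * (r:ℂ)‖)^2 := by
      rw [mul_pow, h1, h2]
      have hexp : (1 - 2 * r * (-(Real.sqrt 2 / 2) * Real.cos (ϑ/2) - Real.sqrt 2 / 2 * Real.sin (ϑ/2)) + r ^ 2) *
          (1 - 2 * r * (-(Real.sqrt 2 / 2) * Real.cos (ϑ/2) + Real.sqrt 2 / 2 * Real.sin (ϑ/2)) + r ^ 2)
          = 1 + r^4 + 2 * Real.sqrt 2 * Real.cos (ϑ/2) * r * (1 + r^2) + 4 * r^2 * Real.cos (ϑ/2)^2 := by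
        linear_combination (r^2 * (Real.cos (ϑ/2)^2 - Real.sin (ϑ/2)^2)) * hs2 - 2*r^2 * hpy
      rw [hexp]
      nlinarith [mul_nonneg (mul_nonneg hs2n hc) hr.le, sq_nonneg r,
        mul_nonneg (mul_nonneg (mul_nonneg hs2n hc) hr.le) (sq_nonneg r),
        mul_nonneg (mul_nonneg hc hc) (sq_nonneg r)]
    nlinarith [hAB2, mul_nonneg a1 a2]
  simpa using inv_anti₀ one_pos key
end

section
/- For any positive integer N, the unique solution φ* ∈ (0, π/2) minimizing csc(θ - φ) cos^{-N-1} φ over φ, in the special case θ = π, is φ* = arctan(1/√(N+1)), and with this value csc(π - φ*)/cos^{N+1}(φ*) = (1 + 1/(N+1))^{N/2 + 1} √(N+1) ≤ √(e (N + 3/2)). -/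
open Real Finset

private lemma log_upper' {x : ℝ} (h0 : 0 < x) (h1 : x ≤ 1/8) :
    Real.log (1+x) ≤ x - x^2/2 + x^3/3 - x^4/4 + (8/7)*x^5 := by
  have habs : |(-x)| < 1 := by rw [abs_neg, abs_of_pos h0]; linarith
  have := Real.abs_log_sub_add_sum_range_le habs 4
  simp only [Finset.sum_range_succ, Finset.sum_range_zero] at this
  rw [abs_neg, abs_of_pos h0] at this
  have h2 : (1 : ℝ) - -x = 1 + x := by ring
  rw [h2] at this
  have h3 : x^(4+1)/(1-x) ≤ (8/7)*x^5 := by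
    rw [div_le_iff₀ (by linarith)]
    nlinarith [pow_pos h0 5]
  have h4 := abs_le.1 this
  push_cast at h4
  nlinarith [h4.1, h4.2]

private lemma log_lower' {x : ℝ} (h0 : 0 < x) (h1 : x ≤ 1/8) :
    x/2 - x^2/8 + x^3/24 - x^4/15 ≤ Real.log (1+x/2) := by
  have h0' : 0 < x/2 := by linarith
  have habs : |(-(x/2))| < 1 := by rw [abs_neg, abs_of_pos h0']; linarith
  have := Real.abs_log_sub_add_sum_range_le habs 3
  simp only [Finset.sum_range_succ, Finset.sum_range_zero] at this
  rw [abs_neg, abs_of_pos h0'] at this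
  have h2 : (1 : ℝ) - -(x/2) = 1 + x/2 := by ring
  rw [h2] at this
  have h3 : (x/2)^(3+1)/(1-x/2) ≤ x^4/15 := by
    rw [div_le_iff₀ (by linarith)]
    nlinarith [pow_pos h0 4]
  have h4 := abs_le.1 this
  push_cast at h4
  nlinarith [h4.1, h4.2]

private lemma key' (m : ℕ) (n : ℝ) (hn : 0 < n) (hm : (m:ℝ) = n+1) (u : ℝ) (hu : 0 < u)
    (hne : u ≠ 1/n) :
    (1+1/n)^m / (1/n) < (1+u)^m / u := by
  have h1n : 0 < 1/n := by positivity
  have ha : (0:ℝ) < n/(n+1) := by positivity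
  have hb : (0:ℝ) < 1/(n+1) := by positivity
  have hab : n/(n+1) + 1/(n+1) = 1 := by field_simp
  have hcc := strictConcaveOn_log_Ioi.2 (Set.mem_Ioi.2 h1n) (Set.mem_Ioi.2 hu)
    (Ne.symm hne) ha hb hab
  simp only [smul_eq_mul] at hcc
  have hmix : n/(n+1) * (1/n) + 1/(n+1) * u = (1+u)/(n+1) := by field_simp
  rw [hmix] at hcc
  have hcc2 : n * log (1/n) + log u < (n+1) * log ((1+u)/(n+1)) := by
    have := mul_lt_mul_of_pos_left hcc (show (0:ℝ) < n+1 by linarith)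
    calc n * log (1/n) + log u
        = (n+1) * (n/(n+1) * log (1/n) + 1/(n+1) * log u) := by field_simp
      _ < (n+1) * log ((1+u)/(n+1)) := this
  rw [Real.log_div (by norm_num) hn.ne'] at hcc2
  rw [Real.log_div (by positivity) (by linarith)] at hcc2
  have hA : log ((1+1/n)^m / (1/n)) < log ((1+u)^m / u) := by
    rw [Real.log_div (by positivity) h1n.ne', Real.log_div (by positivity) hu.ne',
      Real.log_pow, Real.log_pow, hm, Real.log_div (by norm_num : (1:ℝ) ≠ 0) hn.ne']
    have h1 : (1:ℝ) + 1/n = (n+1)/n := by field_simp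
    rw [h1, Real.log_div (by linarith) hn.ne']
    simp only [Real.log_one] at hcc2 ⊢
    nlinarith [hcc2]
  have hApos : 0 < (1+1/n)^m / (1/n) := by positivity
  have hBpos : 0 < (1+u)^m / u := by positivity
  exact (Real.log_lt_log_iff hApos hBpos).1 hA

set_option maxHeartbeats 3000000 in
theorem stmt5 (N : ℕ) (hN : 0 < N) :
    let φs : ℝ := Real.arctan (1 / Real.sqrt (N + 1))
    0 < φs ∧ φs < π / 2 ∧
    (∀ φ : ℝ, 0 < φ → φ < π / 2 → φ ≠ φs →
      1 / Real.sin (π - φs) / Real.cos φs ^ (N + 1) <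
        1 / Real.sin (π - φ) / Real.cos φ ^ (N + 1)) ∧
    1 / Real.sin (π - φs) / Real.cos φs ^ (N + 1)
      = (1 + 1 / ((N : ℝ) + 1)) ^ ((N : ℝ) / 2 + 1) * Real.sqrt (N + 1) ∧
    1 / Real.sin (π - φs) / Real.cos φs ^ (N + 1)
      ≤ Real.sqrt (Real.exp 1 * ((N : ℝ) + 3 / 2)) := by
  intro φs
  set n : ℝ := (N:ℝ) + 1 with hn_def
  have hn2 : (2:ℝ) ≤ n := by
    have : (1:ℝ) ≤ (N:ℝ) := by exact_mod_cast hN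
    simp only [hn_def]; linarith
  have hn1 : (1:ℝ) ≤ n := by linarith
  have hn0 : (0:ℝ) < n := by linarith
  set s : ℝ := Real.sqrt n with hs_def
  have hs0 : 0 < s := Real.sqrt_pos.2 hn0
  have hs2 : s^2 = n := Real.sq_sqrt hn0.le
  set a : ℝ := 1/s with ha_def
  have ha0 : 0 < a := by positivity
  have ha2 : a^2 = 1/n := by rw [ha_def, div_pow, one_pow, hs2]
  have hφs : φs = Real.arctan a := by
    simp only [φs, ha_def, hs_def, hn_def]
  clear_value φs
  -- basic bounds on φs
  have h1 : 0 < φs := by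
    rw [hφs, ← Real.arctan_zero]
    exact Real.arctan_strictMono ha0
  have h2 : φs < π/2 := by rw [hφs]; exact Real.arctan_lt_pi_div_two a
  -- values of sin and cos at φs
  set r : ℝ := Real.sqrt (1 + a^2) with hr_def
  have hr0 : 0 < r := Real.sqrt_pos.2 (by positivity)
  have hr2 : r^2 = 1 + 1/n := by rw [hr_def, Real.sq_sqrt (by positivity), ha2]
  clear_value n s a r
  have hcos : Real.cos φs = 1/r := by rw [hφs, Real.cos_arctan, hr_def]
  have hsin : Real.sin φs = a/r := by rw [hφs, Real.sin_arctan, hr_def]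
  have hsinpos : 0 < Real.sin φs := by rw [hsin]; positivity
  have hcospos : 0 < Real.cos φs := by rw [hcos]; positivity
  -- the value V
  have hV : 1 / Real.sin (π - φs) / Real.cos φs ^ (N + 1) = r^(N+2) * s := by
    rw [Real.sin_pi_sub, hsin, hcos, ha_def]
    rw [div_pow, one_pow]
    field_simp
    ring
  have hVpos : 0 < 1 / Real.sin (π - φs) / Real.cos φs ^ (N + 1) := by
    rw [hV]; positivity
  have hVsq : (1 / Real.sin (π - φs) / Real.cos φs ^ (N + 1))^2
      = (1 + 1/n)^(N+2) * n := by
    rw [hV, mul_pow, ← pow_mul, mul_comm (N+2) 2, pow_mul, hr2, hs2]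
  have hdiv : (1 + 1/n)^(N+2) / (1/n) = (1 + 1/n)^(N+2) * n := by
    rw [div_eq_iff (by positivity : (1:ℝ)/n ≠ 0)]
    field_simp
  refine ⟨h1, h2, ?_, ?_, ?_⟩
  · -- minimality
    intro φ hφ0 hφ2 hφne
    have hcpos : 0 < Real.cos φ := Real.cos_pos_of_mem_Ioo ⟨by linarith [Real.pi_pos], hφ2⟩
    have hspos : 0 < Real.sin φ := Real.sin_pos_of_pos_of_lt_pi hφ0 (by linarith [Real.pi_pos])
    set c : ℝ := Real.cos φ
    set si : ℝ := Real.sin φ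
    set u : ℝ := si^2 / c^2 with hu_def
    have hu0 : 0 < u := by positivity
    have hsc : si^2 + c^2 = 1 := Real.sin_sq_add_cos_sq φ
    have hune : u ≠ 1/n := by
      intro hcon
      apply hφne
      have htan : Real.tan φ = si / c := Real.tan_eq_sin_div_cos φ
      have htansq : (si/c)^2 = a^2 := by
        rw [div_pow, ← hu_def, hcon, ha2]
      have htana : si/c = a := by
        have hfac : (si/c - a) * (si/c + a) = 0 := by nlinarith [htansq]
        rcases mul_eq_zero.1 hfac with h | h
        · linarith
        · exfalso
          have : 0 < si/c + a := by positivity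
          linarith
      have : Real.arctan (Real.tan φ) = φ := Real.arctan_tan (by linarith [Real.pi_pos]) hφ2
      rw [← this, htan, htana, hφs]
    have hkey := key' (N+2) n hn0 (by push_cast [hn_def]; ring) u hu0 hune
    rw [hdiv] at hkey
    -- rewrite target quantities
    have hWpos : 0 < 1 / Real.sin (π - φ) / Real.cos φ ^ (N + 1) := by
      rw [Real.sin_pi_sub]
      positivity
    have hWsq : (1 / Real.sin (π - φ) / Real.cos φ ^ (N + 1))^2 = (1+u)^(N+2) / u := by
      rw [Real.sin_pi_sub]
      have h1u : 1 + u = 1/c^2 := by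
        rw [hu_def]
        field_simp
        linarith [hsc]
      have hc := hcpos.ne'
      have hsi := hspos.ne'
      rw [h1u, hu_def]
      field_simp
      change si ^ 2 / (si ^ 2 * (c ^ (N + 1)) ^ 2) = c ^ 2 * (1 / c ^ 2) ^ (N + 2)
      rw [← div_div, div_self (pow_ne_zero 2 hsi), div_pow, one_pow, ← pow_mul, ← pow_mul]
      rw [show 2 * (N + 2) = 2 + (N + 1) * 2 by ring, pow_add, ← div_div, ← mul_div_assoc,
        mul_one_div, div_self (pow_ne_zero 2 hc)]
    have hsqlt : (1 / Real.sin (π - φs) / Real.cos φs ^ (N + 1))^2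
        < (1 / Real.sin (π - φ) / Real.cos φ ^ (N + 1))^2 := by
      rw [hVsq, hWsq]; exact hkey
    exact lt_of_pow_lt_pow_left₀ 2 hWpos.le hsqlt
  · -- the equality
    rw [hV]
    congr 1
    rw [← hr2]
    rw [← Real.rpow_natCast r (N+2), ← Real.rpow_natCast r 2, ← Real.rpow_mul hr0.le]
    congr 1
    push_cast
    ring
  · -- the upper bound
    rw [show Real.exp 1 * ((N : ℝ) + 3 / 2) = Real.exp 1 * (n + 1/2) by rw [hn_def]; ring]
    rw [Real.le_sqrt hVpos.le (by positivity)]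
    rw [hVsq]
    rcases lt_or_ge N 7 with hsmall | hbig
    · -- small cases
      interval_cases N <;>
        rw [hn_def] <;> push_cast <;> norm_num <;>
          nlinarith [Real.exp_one_gt_d9, Real.exp_pos 1]
    · -- large case
      obtain ⟨x, hx_def⟩ : ∃ x : ℝ, x = 1/n := ⟨_, rfl⟩
      have hx0 : 0 < x := by rw [hx_def]; positivity
      have hn8 : (8:ℝ) ≤ n := by
        rw [hn_def]
        have : (7:ℝ) ≤ (N:ℝ) := by exact_mod_cast hbig
        linarith
      have hx8 : x ≤ 1/8 := by
        rw [hx_def]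
        exact one_div_le_one_div_of_le (by norm_num) hn8
      have hlu := log_upper' hx0 hx8
      have hll := log_lower' hx0 hx8
      have hn0' : n ≠ 0 := hn0.ne'
      have hcoef : ((N:ℝ)+2) = (1+x)/x := by
        have hxne : x ≠ 0 := hx0.ne'
        rw [eq_div_iff hxne, hx_def, hn_def]
        field_simp
        ring
      have core : ((N:ℝ)+2) * Real.log (1+x) ≤ 1 + Real.log (1+x/2) := by
        have step1 : ((N:ℝ)+2) * Real.log (1+x)
            ≤ ((N:ℝ)+2) * (x - x^2/2 + x^3/3 - x^4/4 + (8/7)*x^5) :=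
          mul_le_mul_of_nonneg_left hlu (by positivity)
        have step2 : ((N:ℝ)+2) * (x - x^2/2 + x^3/3 - x^4/4 + (8/7)*x^5)
            ≤ 1 + (x/2 - x^2/8 + x^3/24 - x^4/15) := by
          rw [hcoef, div_mul_eq_mul_div, div_le_iff₀ hx0]
          have p4 : x^4 ≤ x^3 * (1/8) := by nlinarith [pow_pos hx0 3]
          have p5 : x^5 ≤ x^3 * (1/64) := by nlinarith [pow_pos hx0 3, sq_nonneg x]
          have p6 : x^6 ≤ x^3 * (1/512) := by nlinarith [pow_pos hx0 3, sq_nonneg x]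
          nlinarith [pow_pos hx0 3, p4, p5, p6]
        linarith
      have hb0 : (0:ℝ) < 1 + x := by linarith
      have lhs_eq : ((1:ℝ)+x)^(N+2) = Real.exp (((N:ℝ)+2) * Real.log (1+x)) := by
        rw [← Real.rpow_natCast (1+x) (N+2), Real.rpow_def_of_pos hb0]
        congr 1
        push_cast
        ring
      have hmain : ((1:ℝ)+x)^(N+2) ≤ Real.exp 1 * (1+x/2) := by
        rw [lhs_eq,
          show Real.exp 1 * (1+x/2) = Real.exp (1 + Real.log (1+x/2)) by
            rw [Real.exp_add, Real.exp_log (by linarith)]]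
        exact Real.exp_le_exp.2 core
      have hxn : x * n = 1 := by rw [hx_def]; field_simp
      calc (1 + 1/n)^(N+2) * n = ((1:ℝ)+x)^(N+2) * n := by rw [hx_def]
        _ ≤ (Real.exp 1 * (1+x/2)) * n := by
            exact mul_le_mul_of_nonneg_right hmain hn0.le
        _ = Real.exp 1 * (n + 1/2) := by
            have h : (1+x/2) * n = n + 1/2 := by
              have h2 : (1+x/2)*n = n + (x*n)/2 := by ring
              rw [h2, hxn]
            rw [mul_assoc, h]
end

section
/- For any integer K ≥ 1, with φ = arctan(K^{-1/2}) one has csc φ · cos^{-K} φ ≤ 2√K and csc² φ · cos^{-K} φ ≤ 3K. -/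
open Real

lemma key4 (K : ℕ) (hK : 1 ≤ K) : ((1 : ℝ) + 1/K)^(K+1) ≤ 4 := by
  rcases Nat.lt_or_ge K 3 with h | h
  · interval_cases K <;> norm_num
  · have hK0 : (0:ℝ) < K := by positivity
    have h3K : (3:ℝ) ≤ K := by exact_mod_cast h
    have h1 : (1:ℝ) + 1/K ≤ 4/3 := by
      have : (1:ℝ)/K ≤ 1/3 :=
        div_le_div_of_nonneg_left (by norm_num) (by norm_num) h3K
      linarith
    have h2 : ((1:ℝ)+1/K)^K ≤ Real.exp 1 := by
      calc ((1:ℝ)+1/K)^K ≤ (Real.exp (1/K))^K := by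
            apply pow_le_pow_left₀ (by positivity)
            have := Real.add_one_le_exp (1/(K:ℝ))
            linarith
      _ = Real.exp 1 := by
            rw [← Real.exp_nat_mul]
            congr 1
            field_simp
    have h3 : Real.exp 1 ≤ 3 := by
      have := Real.exp_one_lt_d9
      linarith
    calc ((1:ℝ)+1/K)^(K+1) = ((1:ℝ)+1/K)^K * ((1:ℝ)+1/K) := pow_succ _ _
    _ ≤ 3 * (4/3) := by
        apply mul_le_mul (h2.trans h3) h1 (by positivity) (by norm_num)
    _ = 4 := by norm_num

theorem stmt6 (K : ℕ) (hK : 1 ≤ K) :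
    let φ : ℝ := Real.arctan (1 / Real.sqrt K)
    1 / Real.sin φ / Real.cos φ ^ K ≤ 2 * Real.sqrt K ∧
    (1 / Real.sin φ) ^ 2 / Real.cos φ ^ K ≤ 3 * K := by
  intro φ
  have hK0 : (0:ℝ) < K := by exact_mod_cast hK
  have hK1 : (1:ℝ) ≤ K := by exact_mod_cast hK
  have hs : (0:ℝ) < Real.sqrt K := Real.sqrt_pos.mpr hK0
  have hs2 : Real.sqrt K ^ 2 = K := Real.sq_sqrt hK0.le
  have hx2 : ((1:ℝ) / Real.sqrt K) ^ 2 = 1 / K := by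
    rw [div_pow, hs2, one_pow]
  set a : ℝ := (1:ℝ) + 1/K with ha
  have ha1 : 1 ≤ a := by
    rw [ha]
    have : (0:ℝ) < 1/K := by positivity
    linarith
  have ha2 : a ≤ 2 := by
    rw [ha]
    have : (1:ℝ)/K ≤ 1 := by
      rw [div_le_one hK0]; exact hK1
    linarith
  have ha0 : 0 < a := by linarith
  set c : ℝ := Real.sqrt a with hc
  have hc0 : 0 < c := Real.sqrt_pos.mpr ha0
  have hc2 : c ^ 2 = a := Real.sq_sqrt ha0.le
  have hcos : Real.cos φ = 1 / c := by
    rw [Real.cos_arctan, hx2]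
  have hsin : Real.sin φ = (1 / Real.sqrt K) / c := by
    rw [Real.sin_arctan, hx2]
  have hkey : a ^ (K+1) ≤ 4 := key4 K hK
  have hsq1 : (c ^ (K+1)) ^ 2 = a ^ (K+1) := by
    rw [← pow_mul, mul_comm, pow_mul, hc2]
  have hsq2 : (c ^ (K+2)) ^ 2 = a ^ (K+2) := by
    rw [← pow_mul, mul_comm, pow_mul, hc2]
  have hc1 : c ^ (K+1) ≤ 2 := by
    nlinarith [pow_pos hc0 (K+1), hsq1, hkey]
  have hcK2 : c ^ (K+2) ≤ 3 := by
    have h8 : a ^ (K+2) ≤ 8 := by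
      have : a ^ (K+2) = a ^ (K+1) * a := pow_succ _ _
      nlinarith [pow_pos ha0 (K+1)]
    nlinarith [pow_pos hc0 (K+2), hsq2]
  have hcosK : Real.cos φ ^ K = 1 / c ^ K := by
    rw [hcos, div_pow, one_pow]
  have hcK0 : (0:ℝ) < c ^ K := pow_pos hc0 K
  constructor
  · have heq : 1 / Real.sin φ / Real.cos φ ^ K = Real.sqrt K * c ^ (K+1) := by
      rw [hsin, hcosK]
      field_simp
      ring
    rw [heq]
    calc Real.sqrt K * c ^ (K+1) ≤ Real.sqrt K * 2 := by
          exact mul_le_mul_of_nonneg_left hc1 hs.le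
    _ = 2 * Real.sqrt K := by ring
  · have heq : (1 / Real.sin φ) ^ 2 / Real.cos φ ^ K = K * c ^ (K+2) := by
      rw [hsin, hcosK]
      field_simp
      rw [hs2]
      ring
    rw [heq]
    calc (K:ℝ) * c ^ (K+2) ≤ K * 3 := mul_le_mul_of_nonneg_left hcK2 hK0.le
    _ = 3 * K := by ring
end

section
/- The function g(t) = (t/2) log(t²/(t²+1)) + (1/2) arctan(1/t) + (1/8) t/(t²+1) is monotonically decreasing on (0, ∞), with limit π/4 as t → 0⁺ and limit 0 as t → +∞. -/
open Real Filter

noncomputable def G : ℝ → ℝ := fun t =>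
  t / 2 * Real.log (t ^ 2 / (t ^ 2 + 1)) + 1 / 2 * Real.arctan (1 / t)
    + 1 / 8 * (t / (t ^ 2 + 1))

lemma key_ineq : ∀ u ∈ Set.Ioo (0:ℝ) 1,
    1/2 * Real.log u + 1/2*(1-u) + 1/8*((1-2*u)*(1-u)) < 0 := by
  set h : ℝ → ℝ := fun u => 1/2 * Real.log u + 1/2*(1-u) + 1/8*((1-2*u)*(1-u)) with hh
  have hd : ∀ u ∈ Set.Ioo (0:ℝ) 1, HasDerivAt h (1/2 * u⁻¹ + (u/2 - 7/8)) u := by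
    intro u hu
    have h1 : HasDerivAt (fun u : ℝ => 1 - u) (-1) u := by
      simpa using (hasDerivAt_const u (1:ℝ)).fun_sub (hasDerivAt_id u)
    have h2 : HasDerivAt (fun u : ℝ => 1 - 2*u) (-2) u := by
      simpa using (hasDerivAt_const u (1:ℝ)).fun_sub ((hasDerivAt_id u).const_mul 2)
    have hlog : HasDerivAt (fun u : ℝ => 1/2 * Real.log u) (1/2 * u⁻¹) u :=
      (Real.hasDerivAt_log hu.1.ne').const_mul (1/2)
    have hP : HasDerivAt (fun u : ℝ => 1/2*(1-u) + 1/8*((1-2*u)*(1-u))) (u/2 - 7/8) u := by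
      have := (h1.const_mul (1/2:ℝ)).fun_add ((h2.fun_mul h1).const_mul (1/8:ℝ))
      refine this.congr_deriv ?_
      ring
    simpa [hh, add_assoc] using hlog.fun_add hP
  have hmono : StrictMonoOn h (Set.Ioc (0:ℝ) 1) := by
    apply strictMonoOn_of_deriv_pos (convex_Ioc 0 1)
    · apply ContinuousOn.add
      apply ContinuousOn.add
      · exact continuousOn_const.mul (Real.continuousOn_log.mono (by
          intro x hx; exact hx.1.ne'))
      · exact (by continuity : Continuous fun u : ℝ => 1/2*(1-u)).continuousOn
      · exact (by continuity : Continuous fun u : ℝ => 1/8*((1-2*u)*(1-u))).continuousOn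
    · intro x hx
      rw [interior_Ioc] at hx
      rw [(hd x hx).deriv]
      rcases hx with ⟨hx0, hx1⟩
      have : 0 < x⁻¹ := by positivity
      nlinarith [sq_nonneg (x - 7/8), mul_inv_cancel₀ hx0.ne', mul_pos hx0 this]
  intro u hu
  have h1 : h 1 = 0 := by simp [hh]
  have := hmono ⟨hu.1, hu.2.le⟩ (by norm_num) hu.2
  rw [h1] at this
  simpa [hh] using this

lemma hasDeriv_G (t : ℝ) (ht : 0 < t) :
    HasDerivAt G
      (1/2 * Real.log (t^2/(t^2+1)) + 1/(2*(t^2+1)) + 1/8*((1-t^2)/(t^2+1)^2)) t := by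
  have hp : (0:ℝ) < t^2+1 := by positivity
  have hne : t^2 + 1 ≠ 0 := hp.ne'
  have ht2 : t^2 ≠ 0 := pow_ne_zero 2 ht.ne'
  have hsq : HasDerivAt (fun t : ℝ => t^2) (2*t) t := by
    simpa using hasDerivAt_pow 2 t
  have hu : HasDerivAt (fun t:ℝ => t^2/(t^2+1)) ((2*t*(t^2+1) - t^2*(2*t))/(t^2+1)^2) t :=
    hsq.div (hsq.add_const 1) hne
  have hlogu : HasDerivAt (fun t:ℝ => Real.log (t^2/(t^2+1)))
      ((2*t*(t^2+1) - t^2*(2*t))/(t^2+1)^2 / (t^2/(t^2+1))) t :=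
    hu.log (div_ne_zero ht2 hne)
  have h1 : HasDerivAt (fun t:ℝ => t/2 * Real.log (t^2/(t^2+1)))
      (1/2 * Real.log (t^2/(t^2+1)) + t/2 * ((2*t*(t^2+1) - t^2*(2*t))/(t^2+1)^2 / (t^2/(t^2+1)))) t :=
    ((hasDerivAt_id t).div_const 2).mul hlogu
  have hinv : HasDerivAt (fun t:ℝ => 1/t) (-(t^2)⁻¹) t := by
    simpa [one_div] using hasDerivAt_inv ht.ne'
  have h2 : HasDerivAt (fun t:ℝ => 1/2 * Real.arctan (1/t))
      (1/2 * (1 / (1 + (1/t)^2) * (-(t^2)⁻¹))) t :=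
    hinv.arctan.const_mul (1/2)
  have h3 : HasDerivAt (fun t:ℝ => 1/8 * (t/(t^2+1)))
      (1/8 * ((1*(t^2+1) - t*(2*t))/(t^2+1)^2)) t :=
    ((hasDerivAt_id t).div (hsq.add_const 1) hne).const_mul (1/8)
  have := (h1.fun_add h2).fun_add h3
  refine this.congr_deriv ?_
  have h1t : (1:ℝ) + (1/t)^2 ≠ 0 := by positivity
  field_simp
  ring

lemma deriv_G_neg (t : ℝ) (ht : 0 < t) :
    1/2 * Real.log (t^2/(t^2+1)) + 1/(2*(t^2+1)) + 1/8*((1-t^2)/(t^2+1)^2) < 0 := by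
  have hp : (0:ℝ) < t^2+1 := by positivity
  set u := t^2/(t^2+1) with hu
  have hu0 : 0 < u := by positivity
  have hu1 : u < 1 := by
    rw [hu, div_lt_one hp]; nlinarith
  have heq : 1/(2*(t^2+1)) + 1/8*((1-t^2)/(t^2+1)^2)
      = 1/2*(1-u) + 1/8*((1-2*u)*(1-u)) := by
    rw [hu]; field_simp; ring
  have := key_ineq u ⟨hu0, hu1⟩
  linarith

lemma G_anti : StrictAntiOn G (Set.Ioi 0) := by
  apply strictAntiOn_of_deriv_neg (convex_Ioi 0)
  · intro x hx
    exact (hasDeriv_G x hx).continuousAt.continuousWithinAt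
  · intro x hx
    rw [interior_Ioi] at hx
    rw [(hasDeriv_G x hx).deriv]
    exact deriv_G_neg x hx

lemma G_zero : Tendsto G (nhdsWithin 0 (Set.Ioi 0)) (nhds (π / 4)) := by
  unfold G
  have hA : Tendsto (fun t : ℝ => t / 2 * Real.log (t ^ 2 / (t ^ 2 + 1)))
      (nhdsWithin 0 (Set.Ioi 0)) (nhds 0) := by
    have h1 : Tendsto (fun t : ℝ => Real.log t * t) (nhdsWithin 0 (Set.Ioi 0)) (nhds 0) := by
      simpa using tendsto_log_mul_rpow_nhdsGT_zero one_pos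
    have h2 : Tendsto (fun t : ℝ => t / 2 * Real.log (t ^ 2 + 1))
        (nhdsWithin 0 (Set.Ioi 0)) (nhds 0) := by
      have : ContinuousAt (fun t : ℝ => t / 2 * Real.log (t ^ 2 + 1)) 0 := by
        apply ContinuousAt.mul
        · fun_prop
        · exact (Real.continuousAt_log (by norm_num)).comp (by fun_prop)
      simpa using this.continuousWithinAt.tendsto
    have := h1.sub h2
    rw [sub_zero] at this
    apply this.congr' ?_
    filter_upwards [self_mem_nhdsWithin] with t (ht : 0 < t)
    have h2ne : t ^ 2 ≠ 0 := pow_ne_zero 2 ht.ne'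
    rw [Real.log_div h2ne (by positivity)]
    rw [show t ^ 2 = t * t by ring, Real.log_mul ht.ne' ht.ne']
    ring
  have hB : Tendsto (fun t : ℝ => 1 / 2 * Real.arctan (1 / t))
      (nhdsWithin 0 (Set.Ioi 0)) (nhds (π / 4)) := by
    have h1 : Tendsto (fun t : ℝ => 1 / t) (nhdsWithin 0 (Set.Ioi 0)) atTop := by
      simpa [one_div] using tendsto_inv_nhdsGT_zero (𝕜 := ℝ)
    have h2 : Tendsto (fun t : ℝ => Real.arctan (1 / t)) (nhdsWithin 0 (Set.Ioi 0))
        (nhds (π / 2)) :=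
      (tendsto_nhds_of_tendsto_nhdsWithin Real.tendsto_arctan_atTop).comp h1
    have h3 := h2.const_mul (1 / 2 : ℝ)
    rw [show (1 / 2 : ℝ) * (π / 2) = π / 4 by ring] at h3
    exact h3
  have hC : Tendsto (fun t : ℝ => 1 / 8 * (t / (t ^ 2 + 1)))
      (nhdsWithin 0 (Set.Ioi 0)) (nhds 0) := by
    have : ContinuousAt (fun t : ℝ => 1 / 8 * (t / (t ^ 2 + 1))) 0 := by fun_prop (disch := norm_num)
    simpa using this.continuousWithinAt.tendsto
  have := (hA.add hB).add hC
  simpa using this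

lemma G_top : Tendsto G atTop (nhds 0) := by
  unfold G
  have hA : Tendsto (fun t : ℝ => t / 2 * Real.log (t ^ 2 / (t ^ 2 + 1))) atTop (nhds 0) := by
    have hlow : Tendsto (fun t : ℝ => -1 / (2 * t)) atTop (nhds 0) := by
      have h := (tendsto_inv_atTop_zero : Tendsto (fun x : ℝ => x⁻¹) atTop (nhds 0)).const_mul (-1/2 : ℝ)
      rw [mul_zero] at h
      exact h.congr (fun t => by field_simp)
    apply tendsto_of_tendsto_of_tendsto_of_le_of_le' hlow tendsto_const_nhds
    · filter_upwards [eventually_gt_atTop 0] with t ht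
      have hp : (0:ℝ) < t ^ 2 + 1 := by positivity
      have hlog : Real.log ((t ^ 2 + 1) / t ^ 2) ≤ (t ^ 2 + 1) / t ^ 2 - 1 :=
        Real.log_le_sub_one_of_pos (by positivity)
      have heq : Real.log (t ^ 2 / (t ^ 2 + 1)) = - Real.log ((t ^ 2 + 1) / t ^ 2) := by
        rw [← Real.log_inv]
        congr 1
        field_simp
      have hb : (t ^ 2 + 1) / t ^ 2 - 1 = 1 / t ^ 2 := by
        field_simp
        ring
      rw [hb] at hlog
      have hlb : -(1 / t ^ 2) ≤ Real.log (t ^ 2 / (t ^ 2 + 1)) := by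
        rw [heq]; linarith
      calc -1 / (2 * t) = t / 2 * (-(1 / t ^ 2)) := by field_simp
        _ ≤ t / 2 * Real.log (t ^ 2 / (t ^ 2 + 1)) :=
            mul_le_mul_of_nonneg_left hlb (by positivity)
    · filter_upwards [eventually_gt_atTop 0] with t ht
      have hp : (0:ℝ) < t ^ 2 + 1 := by positivity
      have : Real.log (t ^ 2 / (t ^ 2 + 1)) ≤ 0 :=
        Real.log_nonpos (by positivity) (by rw [div_le_one hp]; nlinarith)
      have h2 : (0:ℝ) ≤ t / 2 := by positivity
      nlinarith
  have hB : Tendsto (fun t : ℝ => 1 / 2 * Real.arctan (1 / t)) atTop (nhds 0) := by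
    have h1 : Tendsto (fun t : ℝ => 1 / t) atTop (nhds 0) := by
      simpa [one_div] using (tendsto_inv_atTop_zero : Tendsto (fun x : ℝ => x⁻¹) atTop (nhds 0))
    have h2 := (Real.continuous_arctan.tendsto 0).comp h1
    have h3 := h2.const_mul (1 / 2 : ℝ)
    rw [Real.arctan_zero, mul_zero] at h3
    exact h3
  have hC : Tendsto (fun t : ℝ => 1 / 8 * (t / (t ^ 2 + 1))) atTop (nhds 0) := by
    have hlow : Tendsto (fun t : ℝ => (0:ℝ)) atTop (nhds 0) := tendsto_const_nhds
    have hhigh : Tendsto (fun t : ℝ => 1 / t) atTop (nhds 0) := by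
      simpa [one_div] using (tendsto_inv_atTop_zero : Tendsto (fun x : ℝ => x⁻¹) atTop (nhds 0))
    have hmid : Tendsto (fun t : ℝ => t / (t ^ 2 + 1)) atTop (nhds 0) := by
      apply tendsto_of_tendsto_of_tendsto_of_le_of_le' hlow hhigh
      · filter_upwards [eventually_gt_atTop 0] with t ht
        positivity
      · filter_upwards [eventually_gt_atTop 0] with t ht
        rw [div_le_div_iff₀ (by positivity) ht]
        nlinarith
    have := hmid.const_mul (1 / 8 : ℝ)
    simpa using this
  have := (hA.add hB).add hC
  simpa using this

theorem stmt8 :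
    let g : ℝ → ℝ := fun t =>
      t / 2 * Real.log (t ^ 2 / (t ^ 2 + 1)) + 1 / 2 * Real.arctan (1 / t)
        + 1 / 8 * (t / (t ^ 2 + 1))
    StrictAntiOn g (Set.Ioi 0) ∧
    Filter.Tendsto g (nhdsWithin 0 (Set.Ioi 0)) (nhds (π / 4)) ∧
    Filter.Tendsto g Filter.atTop (nhds 0) := by
  exact ⟨G_anti, G_zero, G_top⟩
end

section
/- Each b_n(λ) defined by b_0(λ) = 1 and b_n(λ) = λ(1-λ) b'_{n-1}(λ) + (2n-1) λ b_{n-1}(λ) is a polynomial in λ of degree exactly n, and for λ > 1 all values b_n(λ) are positive. -/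
open Polynomial

/-- The polynomials `b_n(λ)` defined by `b_0 = 1` and
`b_n = λ(1-λ) b'_{n-1} + (2n-1) λ b_{n-1}`. -/
noncomputable def bPoly : ℕ → Polynomial ℝ
  | 0 => 1
  | n + 1 => X * (1 - X) * (derivative (bPoly n)) +
      (C ((2 : ℝ) * (n + 1) - 1)) * (X * bPoly n)

lemma coeff_rec (p : Polynomial ℝ) (c : ℝ) (k : ℕ) :
    (X * (1 - X) * derivative p + C c * (X * p)).coeff (k + 1)
      = (k + 1) * p.coeff (k + 1) + (c - k) * p.coeff k := by
  have h1 : X * (1 - X) * derivative p = X * derivative p - X * (X * derivative p) := by ring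
  rw [h1]
  cases k with
  | zero =>
      simp only [coeff_add, coeff_sub, coeff_X_mul, coeff_C_mul, coeff_derivative,
        mul_coeff_zero, coeff_X_zero, zero_mul]
      push_cast; ring
  | succ j =>
      simp only [coeff_add, coeff_sub, coeff_X_mul, coeff_C_mul, coeff_derivative]
      push_cast; ring

lemma coeff_rec_zero (p : Polynomial ℝ) (c : ℝ) :
    (X * (1 - X) * derivative p + C c * (X * p)).coeff 0 = 0 := by
  simp [mul_coeff_zero]

lemma bPoly_key (n : ℕ) :
    (∀ k, 0 ≤ (bPoly n).coeff k) ∧ 0 < (bPoly n).coeff n ∧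
      ∀ k, n < k → (bPoly n).coeff k = 0 := by
  induction n with
  | zero =>
      refine ⟨fun k => ?_, by simp [bPoly], fun k hk => ?_⟩
      · show (0:ℝ) ≤ (bPoly 0).coeff k
        simp only [bPoly, coeff_one]
        positivity
      · simp only [bPoly, coeff_one]
        rw [if_neg (by omega)]
  | succ n ih =>
      obtain ⟨hnn, hpos, hzero⟩ := ih
      have hrec : ∀ k : ℕ, (bPoly (n+1)).coeff (k+1)
          = (k + 1) * (bPoly n).coeff (k+1)
            + (((2:ℝ) * (n+1) - 1) - k) * (bPoly n).coeff k := by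
        intro k
        show (X * (1 - X) * derivative (bPoly n) +
          C ((2:ℝ) * (n+1) - 1) * (X * bPoly n)).coeff (k+1) = _
        exact coeff_rec _ _ _
      have hz : (bPoly (n+1)).coeff 0 = 0 := coeff_rec_zero _ _
      refine ⟨fun k => ?_, ?_, fun k hk => ?_⟩
      · cases k with
        | zero => rw [hz]
        | succ j =>
            rw [hrec j]
            rcases le_or_gt j n with h | h
            · have h1 : (0:ℝ) ≤ (2:ℝ) * (n+1) - 1 - j := by
                have : (j:ℝ) ≤ n := by exact_mod_cast h
                linarith
              have := hnn (j+1); have := hnn j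
              positivity
            · rw [hzero j h, hzero (j+1) (by omega)]
              simp
      · rw [hrec n, hzero (n+1) (by omega)]
        have h1 : (0:ℝ) < (2:ℝ) * (n+1) - 1 - n := by linarith
        have := hpos
        nlinarith
      · obtain ⟨j, rfl⟩ : ∃ j, k = j + 1 := ⟨k - 1, by omega⟩
        rw [hrec j, hzero j (by omega), hzero (j+1) (by omega)]
        ring

theorem stmt14 (n : ℕ) :
    (bPoly n).degree = n ∧ ∀ l : ℝ, 1 < l → 0 < (bPoly n).eval l := by
  obtain ⟨hnn, hpos, hzero⟩ := bPoly_key n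
  have hdeg : (bPoly n).degree = n := by
    apply le_antisymm
    · rw [degree_le_iff_coeff_zero]
      intro m hm
      exact hzero m (by exact_mod_cast hm)
    · exact le_degree_of_ne_zero (ne_of_gt hpos)
  refine ⟨hdeg, fun l hl => ?_⟩
  have hnd : (bPoly n).natDegree = n := natDegree_eq_of_degree_eq_some hdeg
  rw [eval_eq_sum_range, hnd]
  apply Finset.sum_pos'
  · intro i _
    have := hnn i
    have hl0 : (0:ℝ) < l := by linarith
    positivity
  · refine ⟨n, Finset.self_mem_range_succ n, ?_⟩
    have hl0 : (0:ℝ) < l := by linarith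
    positivity
end
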